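/- Let X be a random variable with 0 ≤ X ≤ c almost surely, let Y be a random variable with a ≤ Y ≤ b almost surely, let δ > 0 be a real number, and let U be a random variable uniformly distributed on [0,1] that is independent of the pair (X, Y). Then δ·P(Y + δ ≥ X ≥ Y + δ·U) = E[(X − Y)·1{Y ≤ X ≤ Y + δ}]. -/

import Mathlib

open MeasureTheory ProbabilityTheory Set

/-!
With `Z = X - Y`, independent of `U`, condition on `Z = z`: since `P(U ≤ t) = t` for
`0 ≤ t ≤ 1` (and `0` for `t < 0`), the event `Z ≤ δ ∧ δ U ≤ Z` has conditional probability
`z / δ` for `z ∈ [0, δ]` and `0` otherwise. Integrating `δ · (z / δ) = z` against the law of `Z`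
over `[0, δ]` gives `E[Z; 0 ≤ Z ≤ δ]`.
-/

lemma volume_restrict_Icc_zero_one_Iic {t : ℝ} (ht : t ≤ 1) :
    volume.restrict (Icc (0 : ℝ) 1) (Iic t) = ENNReal.ofReal t := by
  have hinter : Iic t ∩ Icc 0 1 = Icc 0 t := by
    ext u; simp only [mem_inter_iff, mem_Iic, mem_Icc]
    constructor
    · rintro ⟨hut, hu0, -⟩; exact ⟨hu0, hut⟩
    · rintro ⟨hu0, hut⟩; exact ⟨hut, hu0, hut.trans ht⟩
  rw [Measure.restrict_apply measurableSet_Iic, hinter, Real.volume_Icc, sub_zero]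

lemma ofReal_mul_volume_restrict_Icc_zero_one {δ : ℝ} (hδ : 0 < δ) (z : ℝ) :
    ENNReal.ofReal δ * volume.restrict (Icc (0 : ℝ) 1) {u | z ≤ δ ∧ δ * u ≤ z} =
      (Icc 0 δ).indicator ENNReal.ofReal z := by
  by_cases hzδ : z ≤ δ
  · have hset : {u : ℝ | z ≤ δ ∧ δ * u ≤ z} = Iic (z / δ) := by
      ext u
      simp only [mem_ofPred_eq, mem_Iic, hzδ, true_and, le_div_iff₀ hδ, mul_comm]
    rw [hset, volume_restrict_Icc_zero_one_Iic ((div_le_one hδ).mpr hzδ),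
      ← ENNReal.ofReal_mul hδ.le, mul_div_cancel₀ _ hδ.ne']
    by_cases hz : 0 ≤ z
    · rw [indicator_of_mem (mem_Icc.mpr ⟨hz, hzδ⟩)]
    · rw [indicator_of_notMem (fun h => hz h.1), ENNReal.ofReal_of_nonpos (not_le.mp hz).le]
  · have hset : {u : ℝ | z ≤ δ ∧ δ * u ≤ z} = ∅ := by simp [hzδ]
    rw [hset, indicator_of_notMem (fun h => hzδ h.2), measure_empty, mul_zero]

section Uniform

variable {Ω : Type*} [MeasurableSpace Ω] {μ : Measure Ω} [IsFiniteMeasure μ]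
  {Z U : Ω → ℝ} {δ : ℝ}

lemma ProbabilityTheory.IndepFun.ofReal_mul_measure_le_mul_uniform
    (hZ : Measurable Z) (hUm : Measurable U) (hU : μ.map U = volume.restrict (Icc 0 1))
    (hInd : IndepFun Z U μ) (hδ : 0 < δ) :
    ENNReal.ofReal δ * μ {ω | Z ω ≤ δ ∧ δ * U ω ≤ Z ω} =
      ∫⁻ ω in Z ⁻¹' Icc 0 δ, ENNReal.ofReal (Z ω) ∂μ := by
  have hA : MeasurableSet {p : ℝ × ℝ | p.1 ≤ δ ∧ δ * p.2 ≤ p.1} :=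
    (measurableSet_le measurable_fst measurable_const).inter
      (measurableSet_le (measurable_const.mul measurable_snd) measurable_fst)
  have hmap : μ.map (fun ω => (Z ω, U ω)) = (μ.map Z).prod (volume.restrict (Icc 0 1)) := by
    rw [← hU]
    exact (indepFun_iff_map_prod_eq_prod_map_map hZ.aemeasurable hUm.aemeasurable).mp hInd
  calc ENNReal.ofReal δ * μ {ω | Z ω ≤ δ ∧ δ * U ω ≤ Z ω}
      = ENNReal.ofReal δ * μ.map (fun ω => (Z ω, U ω)) {p | p.1 ≤ δ ∧ δ * p.2 ≤ p.1} := by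
        rw [Measure.map_apply (hZ.prodMk hUm) hA]; rfl
    _ = ∫⁻ z, ENNReal.ofReal δ * volume.restrict (Icc (0 : ℝ) 1) {u | z ≤ δ ∧ δ * u ≤ z}
          ∂μ.map Z := by
        rw [hmap, Measure.prod_apply hA, lintegral_const_mul' _ _ ENNReal.ofReal_ne_top]; rfl
    _ = ∫⁻ z in Icc 0 δ, ENNReal.ofReal z ∂μ.map Z := by
        simp_rw [ofReal_mul_volume_restrict_Icc_zero_one hδ, lintegral_indicator measurableSet_Icc]
    _ = ∫⁻ ω in Z ⁻¹' Icc 0 δ, ENNReal.ofReal (Z ω) ∂μ :=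
        setLIntegral_map measurableSet_Icc ENNReal.measurable_ofReal hZ

lemma ProbabilityTheory.IndepFun.mul_measure_le_mul_uniform
    (hZ : Measurable Z) (hUm : Measurable U) (hU : μ.map U = volume.restrict (Icc 0 1))
    (hInd : IndepFun Z U μ) (hδ : 0 < δ) :
    δ * (μ {ω | Z ω ≤ δ ∧ δ * U ω ≤ Z ω}).toReal = ∫ ω in Z ⁻¹' Icc 0 δ, Z ω ∂μ := by
  have hnn : 0 ≤ᵐ[μ.restrict (Z ⁻¹' Icc 0 δ)] Z := by
    filter_upwards [ae_restrict_mem (hZ measurableSet_Icc)] with ω hω using hω.1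
  rw [integral_eq_lintegral_of_nonneg_ae hnn hZ.aestronglyMeasurable,
    ← hInd.ofReal_mul_measure_le_mul_uniform hZ hUm hU hδ, ENNReal.toReal_mul,
    ENNReal.toReal_ofReal hδ.le]

end Uniform

theorem delta_pos_identity_general
    {Ω : Type*} [MeasureSpace Ω] [IsProbabilityMeasure (ℙ : Measure Ω)]
    {X Y U : Ω → ℝ}
    (hXm : Measurable X) (hYm : Measurable Y) (hUm : Measurable U)
    {δ : ℝ} (hδ : 0 < δ)
    (hU : Measure.map U ℙ = volume.restrict (Set.Icc (0 : ℝ) 1))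
    (hInd : IndepFun (fun ω => (X ω, Y ω)) U ℙ) :
    δ * (ℙ {ω | Y ω + δ ≥ X ω ∧ X ω ≥ Y ω + δ * U ω}).toReal =
      ∫ ω in {ω | Y ω ≤ X ω ∧ X ω ≤ Y ω + δ}, (X ω - Y ω) ∂ℙ := by
  have hIndZ : IndepFun (fun ω => X ω - Y ω) U ℙ :=
    hInd.comp (φ := fun p : ℝ × ℝ => p.1 - p.2) (ψ := id)
      (measurable_fst.sub measurable_snd) measurable_id
  have hevent : {ω | Y ω + δ ≥ X ω ∧ X ω ≥ Y ω + δ * U ω} =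
      {ω | X ω - Y ω ≤ δ ∧ δ * U ω ≤ X ω - Y ω} := by
    ext ω; simp only [mem_ofPred_eq]
    constructor <;> rintro ⟨h₁, h₂⟩ <;> constructor <;> linarith
  have hrange : {ω | Y ω ≤ X ω ∧ X ω ≤ Y ω + δ} = (fun ω => X ω - Y ω) ⁻¹' Icc 0 δ := by
    ext ω; simp only [mem_ofPred_eq, mem_preimage, mem_Icc]
    constructor <;> rintro ⟨h₁, h₂⟩ <;> constructor <;> linarith
  rw [hevent, hrange]
  exact hIndZ.mul_measure_le_mul_uniform (hXm.sub hYm) hUm hU hδ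

/-- The case `δ > 0` in the proof of Lemma 1:
`δ·P(Y + δ ≥ X ≥ Y + δU) = E[(X − Y)·1{Y ≤ X ≤ Y + δ}]`. -/
theorem delta_pos_identity
    {Ω : Type*} [MeasureSpace Ω] [IsProbabilityMeasure (ℙ : Measure Ω)]
    {c a b : ℝ} {X Y U : Ω → ℝ}
    (hXm : Measurable X) (hYm : Measurable Y) (hUm : Measurable U)
    (hX : ∀ᵐ ω ∂ℙ, 0 ≤ X ω ∧ X ω ≤ c)
    (hY : ∀ᵐ ω ∂ℙ, a ≤ Y ω ∧ Y ω ≤ b)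
    {δ : ℝ} (hδ : 0 < δ)
    (hU : Measure.map U ℙ = volume.restrict (Set.Icc (0 : ℝ) 1))
    (hInd : IndepFun (fun ω => (X ω, Y ω)) U ℙ) :
    δ * (ℙ {ω | Y ω + δ ≥ X ω ∧ X ω ≥ Y ω + δ * U ω}).toReal =
      ∫ ω in {ω | Y ω ≤ X ω ∧ X ω ≤ Y ω + δ}, (X ω - Y ω) ∂ℙ :=
  delta_pos_identity_general hXm hYm hUm hδ hU hInd
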